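/- Let G = (X ∪ Y, E) be X-semi-bipartite with Y finite, and let M be any maximum matching. If M is not Y-perfect, then Hall's condition fails: there exists S ⊆ Y with |N_G(S) ∩ X| < |S|. -/

import Mathlib

/-!
Hall's theorem turns Hall's condition on `Y` into a matching with `|Y|` edges. On the other hand,
since `X` is independent and `X ∪ Y` is everything, every edge of a matching has an endpoint in
`Y`, and distinct edges of a matching have distinct endpoints; so a matching that misses a vertex
of `Y` has fewer than `|Y|` edges and cannot be maximum.
-/

open SimpleGraph

theorem Set.exists_injective_of_forall_ncard_le {α β : Type*} [Finite β] {s : Set α}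
    (r : α → β → Prop) (hall : ∀ t ⊆ s, t.ncard ≤ {b | ∃ a ∈ t, r a b}.ncard) :
    ∃ f : s → β, Function.Injective f ∧ ∀ a : s, r a (f a) := by
  classical
  have : Fintype β := Fintype.ofFinite β
  refine (Fintype.all_card_le_filter_rel_iff_exists_injective (fun (a : s) b => r a b)).mp ?_
  intro t
  have h := hall (Subtype.val '' (t : Set s)) (by simp)
  rw [Set.ncard_image_of_injective _ Subtype.val_injective, Set.ncard_coe_finset] at h
  convert h using 1
  rw [← Set.ncard_coe_finset]
  congr 1
  ext b
  simp

namespace SimpleGraph.Subgraph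

variable {V : Type*} {G : SimpleGraph V} {M : G.Subgraph}

theorem IsMatching.ncard_verts [Finite V] (hM : M.IsMatching) :
    M.verts.ncard = 2 * M.edgeSet.ncard := by
  have : Fintype M.edgeSet := Fintype.ofFinite _
  have hfibre : ∀ e : M.edgeSet, Nat.card {v // hM.toEdge v = e} = 2 := by
    rintro ⟨e, he⟩
    induction e using Sym2.ind with
    | _ u w =>
      change Nat.card (hM.toEdge ⁻¹' {⟨s(u, w), he⟩}) = 2
      rw [hM.toEdge_preimage_singleton he, Nat.card_coe_set_eq,
        Set.ncard_pair (by simpa using he.ne)]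
  rw [← Nat.card_coe_set_eq, ← Nat.card_coe_set_eq,
    ← Nat.card_congr (Equiv.sigmaFiberEquiv hM.toEdge), Nat.card_sigma,
    Finset.sum_congr rfl fun e _ => hfibre e, Finset.sum_const, Finset.card_univ,
    ← Nat.card_eq_fintype_card, Nat.card_coe_set_eq, smul_eq_mul, mul_comm]

theorem IsMatching.ncard_edgeSet_le_ncard_inter [Finite V] (hM : M.IsMatching) {s : Set V}
    (hs : ∀ ⦃u w⦄, M.Adj u w → u ∈ s ∨ w ∈ s) :
    M.edgeSet.ncard ≤ (M.verts ∩ s).ncard := by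
  rw [← Nat.card_coe_set_eq, ← Nat.card_coe_set_eq]
  refine Nat.card_le_card_of_surjective (fun v => hM.toEdge ⟨v, v.2.1⟩) ?_
  rintro ⟨e, he⟩
  induction e using Sym2.ind with
  | _ u w =>
    rcases hs he with hu | hw
    · exact ⟨⟨u, he.fst_mem, hu⟩, hM.toEdge_eq_of_adj he⟩
    · refine ⟨⟨w, he.snd_mem, hw⟩, ?_⟩
      simp [hM.toEdge_eq_of_adj he.symm, Sym2.eq_swap]

theorem exists_isMatching_ncard_edgeSet_eq [Finite V] {s : Set V} (f : s → V)
    (hf : Function.Injective f) (hadj : ∀ v : s, G.Adj v (f v)) (hout : ∀ v : s, f v ∉ s) :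
    ∃ M : G.Subgraph, M.IsMatching ∧ M.edgeSet.ncard = s.ncard := by
  have hdisj : Disjoint s (Set.range f) :=
    Set.disjoint_right.mpr (by rintro _ ⟨v, rfl⟩; exact hout v)
  obtain ⟨M, hverts, hM⟩ :=
    IsMatching.exists_of_disjoint_sets_of_equiv hdisj (Equiv.ofInjective f hf) hadj
  refine ⟨M, hM, ?_⟩
  have hcard := hM.ncard_verts
  rw [hverts, Set.ncard_union_eq hdisj, ← Nat.card_coe_set_eq (Set.range f),
    Nat.card_range_of_injective hf, Nat.card_coe_set_eq] at hcard
  omega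

end SimpleGraph.Subgraph

/-- If a maximum matching `M` on an `X`-semi-bipartite graph is not `Y`-perfect,
then Hall's condition fails: some `S ⊆ Y` has `|N_G(S) ∩ X| < |S|`. -/
theorem semi_bipartite_not_perfect_hall_fails {V : Type*} [Fintype V] (G : SimpleGraph V)
    (X Y : Set V) (hdisj : Disjoint X Y) (hcover : X ∪ Y = Set.univ)
    (hind : ∀ a ∈ X, ∀ b ∈ X, ¬ G.Adj a b)
    (M : G.Subgraph) (hM : M.IsMatching)
    (hmax : ∀ M' : G.Subgraph, M'.IsMatching → M'.edgeSet.ncard ≤ M.edgeSet.ncard)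
    (hnotperf : ¬ Y ⊆ M.verts) :
    ∃ S ⊆ Y, ({w | ∃ u ∈ S, G.Adj u w} ∩ X).ncard < S.ncard := by
  by_contra! hHall
  have hHallX : ∀ S ⊆ Y, S.ncard ≤ {x | ∃ y ∈ S, G.Adj y x ∧ x ∈ X}.ncard := by
    intro S hS
    refine (hHall S hS).trans_eq (congrArg Set.ncard ?_)
    ext w
    simp only [Set.mem_inter_iff, Set.mem_ofPred_eq, ← and_assoc, exists_and_right]
  obtain ⟨f, hf, hfX⟩ := Set.exists_injective_of_forall_ncard_le _ hHallX
  obtain ⟨M', hM', hM'card⟩ := Subgraph.exists_isMatching_ncard_edgeSet_eq f hf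
    (fun y => (hfX y).1) fun y => hdisj.notMem_of_mem_left (hfX y).2
  have hmeetY : ∀ ⦃u w⦄, M.Adj u w → u ∈ Y ∨ w ∈ Y := by
    intro u w huw
    by_contra! h
    have hX : ∀ v, v ∉ Y → v ∈ X := fun v hv =>
      (Set.eq_univ_iff_forall.mp hcover v).resolve_right hv
    exact hind u (hX u h.1) w (hX w h.2) (M.adj_sub huw)
  have hlt : (M.verts ∩ Y).ncard < Y.ncard :=
    Set.ncard_lt_ncard (Set.inter_subset_right.ssubset_of_not_subset
      fun h => hnotperf fun y hy => (h hy).1)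
  have hMle : M.edgeSet.ncard ≤ (M.verts ∩ Y).ncard := hM.ncard_edgeSet_le_ncard_inter hmeetY
  have hM'le : M'.edgeSet.ncard ≤ M.edgeSet.ncard := hmax M' hM'
  omega
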